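/- arXiv:1406.7791 — 3 statements merged into one kernel-verified Lean document; each statement's English description precedes it below -/
import Mathlib

section
/- Let R be a commutative noetherian ring and S a faithfully flat R-algebra that has finite projective dimension as an R-module. Let I be an acyclic complex of injective R-modules such that the complex Hom_R(S,I) is acyclic and the R-module Hom_R(S, Ker(∂^I_n)) is injective for every integer n. Then the complex Hom_R(M,I) is acyclic for every R-module M. -/
open CategoryTheory

universe u

/-- The `R`-module `M` admits a projective resolution `P` with `P_m = 0` for all `m > j`;
i.e. `M` has projective dimension at most `j`. -/
def projResBddAbove (R : Type u) [CommRing R] (M : ModuleCat.{u} R) (j : ℕ) : Prop :=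
  ∃ P : ProjectiveResolution M, ∀ m : ℕ, j < m → Limits.IsZero (P.complex.X m)

/-- A homological complex is acyclic if it is exact in every degree, i.e. all its
homology vanishes. -/
def isAcyclic {R : Type u} [CommRing R] {ι : Type*} {c : ComplexShape ι}
    (K : HomologicalComplex (ModuleCat.{u} R) c) : Prop :=
  ∀ i, K.ExactAt i

/-- The complex `Hom_R(M, I)` obtained by applying the functor `Hom_R(M, -)` degreewise to
a `ℤ`-indexed chain complex `I` of `R`-modules. -/
noncomputable def homComplex {R : Type u} [CommRing R] (M : ModuleCat.{u} R)
    (I : ChainComplex (ModuleCat.{u} R) ℤ) : ChainComplex (ModuleCat.{u} R) ℤ :=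
  (((linearCoyoneda R (ModuleCat.{u} R)).obj (Opposite.op M)).mapHomologicalComplex _).obj I

namespace HomAcyclicAux

variable {R : Type u} [CommRing R]

section Defs

variable (I : ChainComplex (ModuleCat.{u} R) ℤ)

/-- cycles -/
def Zc (b : ℤ) : Submodule R (I.X b) := LinearMap.ker (I.d b (b - 1)).hom

lemma d_mem_Zc (a b : ℤ) (x : I.X a) : I.d a b x ∈ Zc I b := by
  have h := I.d_comp_d a b (b - 1)
  have h := congrArg (fun f => ModuleCat.Hom.hom f) h
  exact LinearMap.mem_ker.mpr (LinearMap.congr_fun h x)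

/-- corestricted differential -/
def dRes (a b : ℤ) : I.X a →ₗ[R] Zc I b :=
  LinearMap.codRestrict (Zc I b) (I.d a b).hom (d_mem_Zc I a b)

/-- the lifting property defining the class `𝒜` at one level -/
def Lft (a b : ℤ) (W : Type u) [AddCommGroup W] [Module R W] : Prop :=
  ∀ φ : W →ₗ[R] Zc I b, ∃ ψ : W →ₗ[R] I.X a, (dRes I a b).comp ψ = φ

lemma Zc_succ (b : ℤ) : Zc I (b + 1) = LinearMap.ker (I.d (b + 1) b).hom := by
  show LinearMap.ker (I.d (b+1) (b+1-1)).hom = LinearMap.ker (I.d (b + 1) b).hom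
  rw [show (b + 1 - 1 : ℤ) = b from add_sub_cancel_right b 1]

lemma dRes_surjective (hIac : isAcyclic I) (b : ℤ) :
    Function.Surjective (dRes I (b + 1) b) := by
  have h := (HomologicalComplex.exactAt_iff' I (b + 1) b (b - 1)
    (by simp [ChainComplex.prev]) (by simp [ChainComplex.next])).mp (hIac b)
  rw [ShortComplex.moduleCat_exact_iff] at h
  have h' : ∀ z : I.X b, I.d b (b - 1) z = 0 → ∃ y : I.X (b + 1), I.d (b + 1) b y = z := h
  rintro ⟨z, hz⟩
  obtain ⟨y, hy⟩ := h' z hz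
  exact ⟨y, Subtype.ext hy⟩

/-- concrete description of exactness of `Hom(W, I)` at `b`. -/
lemma exactAt_homComplex_concrete (W : ModuleCat.{u} R) (b : ℤ) :
    (homComplex W I).ExactAt b ↔
      ∀ f : (W : Type u) →ₗ[R] I.X b, (I.d b (b - 1)).hom.comp f = 0 →
        ∃ g : (W : Type u) →ₗ[R] I.X (b + 1), (I.d (b + 1) b).hom.comp g = f := by
  rw [HomologicalComplex.exactAt_iff' (homComplex W I) (b + 1) b (b - 1)
    (by simp [ChainComplex.prev]) (by simp [ChainComplex.next]),
    ShortComplex.moduleCat_exact_iff]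
  constructor
  · intro h f hf
    obtain ⟨g, hg⟩ := h (ModuleCat.ofHom f)
      (ModuleCat.hom_ext (LinearMap.ext fun w => LinearMap.congr_fun hf w))
    exact ⟨g.hom, LinearMap.ext fun w => congrArg (fun k => ModuleCat.Hom.hom k w) hg⟩
  · intro h f hf
    obtain ⟨g, hg⟩ := h f.hom
      (LinearMap.ext fun w => congrArg (fun k => ModuleCat.Hom.hom k w) hf)
    exact ⟨ModuleCat.ofHom g, ModuleCat.hom_ext (LinearMap.ext fun w => LinearMap.congr_fun hg w)⟩

/-- translation: exactness of `Hom(W, I)` at `b` is the lifting property. -/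
lemma exactAt_homComplex_iff (W : ModuleCat.{u} R) (b : ℤ) :
    (homComplex W I).ExactAt b ↔ Lft I (b + 1) b W := by
  rw [exactAt_homComplex_concrete]
  constructor
  · intro h φ
    have hφ : (I.d b (b - 1)).hom.comp ((Zc I b).subtype.comp φ) = 0 := by
      ext w
      exact (φ w).2
    obtain ⟨g, hg⟩ := h ((Zc I b).subtype.comp φ) hφ
    refine ⟨g, ?_⟩
    ext w
    exact LinearMap.congr_fun hg w
  · intro h f hf
    have hmem : ∀ w, f w ∈ Zc I b := fun w => LinearMap.congr_fun hf w
    obtain ⟨ψ, hψ⟩ := h (LinearMap.codRestrict (Zc I b) f hmem)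
    refine ⟨ψ, ?_⟩
    ext w
    exact congrArg Subtype.val (LinearMap.congr_fun hψ w)

end Defs

section Closure

variable {I : ChainComplex (ModuleCat.{u} R) ℤ}

lemma mod_injective {n : ℤ} (h : Injective (I.X n)) : Module.Injective R (I.X n) :=
  Module.injective_module_of_injective_object R (I.X n) (inj := h)

lemma extend_to {n : ℤ} (h : Injective (I.X n)) {A B : Type u}
    [AddCommGroup A] [Module R A] [AddCommGroup B] [Module R B]
    (i : A →ₗ[R] B) (hi : Function.Injective i) (g : A →ₗ[R] I.X n) :
    ∃ e : B →ₗ[R] I.X n, e ∘ₗ i = g :=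
  haveI := mod_injective h
  Module.Injective.extension_property R (I.X n) A B i hi g

/-- closure of the lifting class under extensions -/
theorem lft_sub_quot {b : ℤ} {B : Type u} [AddCommGroup B] [Module R B] (U : Submodule R B)
    (hinj1 : Injective (I.X (b + 1)))
    (hU : Lft I (b + 1) b U) (hQ : Lft I (b + 1) b (B ⧸ U)) : Lft I (b + 1) b B := by
  intro φ
  obtain ⟨ψA, hψA⟩ := hU (φ ∘ₗ U.subtype)
  obtain ⟨η, hη⟩ := extend_to hinj1 U.subtype U.injective_subtype ψA
  have hθ : U ≤ LinearMap.ker (φ - (dRes I (b + 1) b) ∘ₗ η) := by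
    intro u hu
    have h1 : η u = ψA ⟨u, hu⟩ := LinearMap.congr_fun hη ⟨u, hu⟩
    have h2 : (dRes I (b + 1) b) (ψA ⟨u, hu⟩) = φ u := LinearMap.congr_fun hψA ⟨u, hu⟩
    simp [LinearMap.mem_ker, h1, h2]
  obtain ⟨μ, hμ⟩ := hQ (U.liftQ _ hθ)
  refine ⟨η + μ ∘ₗ U.mkQ, LinearMap.ext fun w => ?_⟩
  have h3 : (dRes I (b + 1) b) (μ (U.mkQ w)) = (φ - (dRes I (b + 1) b) ∘ₗ η) w := by
    have h := LinearMap.congr_fun hμ (U.mkQ w)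
    simp only [LinearMap.comp_apply, Submodule.mkQ_apply, Submodule.liftQ_apply] at h
    exact h
  show (dRes I (b + 1) b) ((η + μ ∘ₗ U.mkQ) w) = φ w
  rw [LinearMap.add_apply, map_add, LinearMap.comp_apply, h3]
  simp

/-- closure: submodule from ambient and quotient -/
theorem lft_amb_quot {b : ℤ} {B : Type u} [AddCommGroup B] [Module R B] (U : Submodule R B)
    (hinjb : Injective (I.X b))
    (hB : Lft I (b + 1) b B) (hQ : Lft I b (b - 1) (B ⧸ U)) : Lft I (b + 1) b U := by
  intro φ
  obtain ⟨e, he⟩ := extend_to hinjb U.subtype U.injective_subtype ((Zc I b).subtype ∘ₗ φ)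
  have hUker : U ≤ LinearMap.ker ((dRes I b (b - 1)) ∘ₗ e) := by
    intro u hu
    have h1 : e u = ((φ ⟨u, hu⟩ : Zc I b) : I.X b) := LinearMap.congr_fun he ⟨u, hu⟩
    have h2 : I.d b (b - 1) (e u) = 0 := by rw [h1]; exact (φ ⟨u, hu⟩).2
    rw [LinearMap.mem_ker, LinearMap.comp_apply]
    exact Subtype.ext h2
  obtain ⟨μ, hμ⟩ := hQ (U.liftQ _ hUker)
  have hmem : ∀ z : B, (e - μ ∘ₗ U.mkQ) z ∈ Zc I b := by
    intro z
    have h4 : (dRes I b (b - 1)) (μ (U.mkQ z)) = (dRes I b (b - 1)) (e z) := by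
      have h := LinearMap.congr_fun hμ (U.mkQ z)
      simp only [LinearMap.comp_apply, Submodule.mkQ_apply, Submodule.liftQ_apply] at h
      exact h
    have h4' : I.d b (b - 1) (μ (U.mkQ z)) = I.d b (b - 1) (e z) := congrArg Subtype.val h4
    show I.d b (b - 1) ((e - μ ∘ₗ U.mkQ) z) = 0
    rw [LinearMap.sub_apply, map_sub, LinearMap.comp_apply, h4', sub_self]
  obtain ⟨ψB, hψB⟩ := hB (LinearMap.codRestrict (Zc I b) (e - μ ∘ₗ U.mkQ) hmem)
  refine ⟨ψB ∘ₗ U.subtype, LinearMap.ext fun u => ?_⟩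
  have h5 : (dRes I (b + 1) b) (ψB (U.subtype u)) =
      (LinearMap.codRestrict (Zc I b) (e - μ ∘ₗ U.mkQ) hmem) (U.subtype u) :=
    LinearMap.congr_fun hψB (U.subtype u)
  show (dRes I (b + 1) b) (ψB (U.subtype u)) = φ u
  rw [h5]
  apply Subtype.ext
  have h6 : U.mkQ (U.subtype u) = 0 := (Submodule.Quotient.mk_eq_zero U).mpr u.2
  have h7 : e (U.subtype u) = ((φ u : Zc I b) : I.X b) := LinearMap.congr_fun he u
  show (e - μ ∘ₗ U.mkQ) (U.subtype u) = ((φ u : Zc I b) : I.X b)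
  rw [LinearMap.sub_apply, LinearMap.comp_apply, h6, map_zero, sub_zero, h7]

theorem lft_retract {a b : ℤ} {V X : Type u}
    [AddCommGroup V] [Module R V] [AddCommGroup X] [Module R X]
    (i : V →ₗ[R] X) (r : X →ₗ[R] V) (hri : r ∘ₗ i = LinearMap.id)
    (hX : Lft I a b X) : Lft I a b V := by
  intro φ
  obtain ⟨Ψ, hΨ⟩ := hX (φ ∘ₗ r)
  refine ⟨Ψ ∘ₗ i, LinearMap.ext fun v => ?_⟩
  have h1 : (dRes I a b) (Ψ (i v)) = φ (r (i v)) := LinearMap.congr_fun hΨ (i v)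
  have h2 : r (i v) = v := LinearMap.congr_fun hri v
  show (dRes I a b) (Ψ (i v)) = φ v
  rw [h1, h2]

theorem lft_equiv {a b : ℤ} {V X : Type u}
    [AddCommGroup V] [Module R V] [AddCommGroup X] [Module R X]
    (e : V ≃ₗ[R] X) (hX : Lft I a b X) : Lft I a b V :=
  lft_retract e.toLinearMap e.symm.toLinearMap
    (LinearMap.ext fun v => e.symm_apply_apply v) hX

theorem lft_subsingleton {a b : ℤ} {W : Type u} [AddCommGroup W] [Module R W]
    [Subsingleton W] : Lft I a b W := by
  intro φ
  refine ⟨0, LinearMap.ext fun w => ?_⟩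
  rw [Subsingleton.elim w 0]
  simp

theorem lft_finsupp {a b : ℤ} {κ : Type u} [AddCommGroup κ] [Module R κ]
    (B : Type u) (hκ : Lft I a b κ) : Lft I a b (B →₀ κ) := by
  intro φ
  choose ψf hψf using fun i : B => hκ (φ ∘ₗ Finsupp.lsingle i)
  refine ⟨Finsupp.lsum ℕ ψf, ?_⟩
  apply Finsupp.lhom_ext'
  intro i
  refine LinearMap.ext fun c => ?_
  have h1 : (Finsupp.lsum ℕ ψf) (Finsupp.single i c) = ψf i c := Finsupp.lsum_single ℕ ψf i c
  show (dRes I a b) ((Finsupp.lsum ℕ ψf) (Finsupp.single i c)) = φ (Finsupp.single i c)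
  rw [h1]
  exact LinearMap.congr_fun (hψf i) c

end Closure

section Torsion

variable {I : ChainComplex (ModuleCat.{u} R) ℤ}

/-- Every module all of whose elements are torsion "beyond the prime `p`" satisfies the
lifting property, provided all cyclic modules `R ⧸ c` with `c > p` do. -/
theorem lft_torsion (hIac : isAcyclic I) (hinj : ∀ n : ℤ, Injective (I.X n))
    (p : Ideal R) (hp : p.IsPrime)
    {W : Type u} [AddCommGroup W] [Module R W]
    (H0 : ∀ x ∈ p, ∀ w : W, x • w = 0)
    (Htor : ∀ w : W, ∃ x, x ∉ p ∧ x • w = 0)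
    (HP : ∀ c : Ideal R, p < c → ∀ m : ℤ, Lft I (m + 1) m (R ⧸ c))
    (b : ℤ) : Lft I (b + 1) b W := by
  intro φ
  set D := dRes I (b + 1) b with hD
  let s : Set (W →ₗ.[R] I.X (b + 1)) :=
    {q | ∀ x : q.domain, D (q x) = φ (x : W)}
  have hbot : (⟨⊥, 0⟩ : W →ₗ.[R] I.X (b + 1)) ∈ s := by
    rintro ⟨x, hx⟩
    obtain rfl : x = 0 := (Submodule.mem_bot R).mp hx
    simp
  have hzorn := zorn_le_nonempty₀ s ?_ _ hbot
  · obtain ⟨m, -, hmax⟩ := hzorn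
    have htop : m.domain = ⊤ := by
      by_contra hne
      obtain ⟨w, hw⟩ : ∃ w : W, w ∉ m.domain := by
        by_contra hcon
        push_neg at hcon
        exact hne (eq_top_iff.mpr fun x _ => hcon x)
      obtain ⟨v, hv⟩ := dRes_surjective I hIac b (φ w)
      obtain ⟨η, hη⟩ := extend_to (hinj (b + 1)) m.domain.subtype m.domain.injective_subtype
        m.toFun
      set cmap : W →ₗ[R] Zc I b := φ - D ∘ₗ η with hcmapdef
      set N : Submodule R W := m.domain ⊔ R ∙ w with hNdef
      have hwN : w ∈ N := Submodule.mem_sup_right (Submodule.mem_span_singleton_self w)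
      have hmN : m.domain ≤ N := le_sup_left
      set U' : Submodule R N := m.domain.comap N.subtype with hU'def
      have hη' : ∀ (z : W) (hz : z ∈ m.domain), η z = m.toFun ⟨z, hz⟩ := fun z hz =>
        LinearMap.congr_fun hη ⟨z, hz⟩
      have hU'ker : U' ≤ LinearMap.ker (cmap ∘ₗ N.subtype) := by
        intro x hx
        have h1 : η (x : W) = m.toFun ⟨(x : W), hx⟩ := hη' _ hx
        have h2 : D (m.toFun ⟨(x : W), hx⟩) = φ (x : W) := hmax.1 ⟨(x : W), hx⟩
        rw [LinearMap.mem_ker, LinearMap.comp_apply]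
        show φ ((x : N) : W) - D (η ((x : N) : W)) = 0
        rw [h1, h2, sub_self]
      set χ := U'.liftQ _ hU'ker with hχdef
      set ρ : R →ₗ[R] (↥N ⧸ U') := U'.mkQ ∘ₗ (LinearMap.toSpanSingleton R N ⟨w, hwN⟩) with hρdef
      have hρval : ∀ r : R, ρ r = U'.mkQ ⟨r • w, N.smul_mem r hwN⟩ := fun r => rfl
      have hρ : Function.Surjective ρ := by
        intro z
        obtain ⟨n, rfl⟩ := U'.mkQ_surjective z
        have hn : (n : W) ∈ m.domain ⊔ R ∙ w := n.2
        rw [Submodule.mem_sup] at hn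
        obtain ⟨uu, huu, t, ht, hsum⟩ := hn
        obtain ⟨r, rfl⟩ := Submodule.mem_span_singleton.mp ht
        refine ⟨r, ?_⟩
        rw [hρval, Submodule.mkQ_apply, Submodule.mkQ_apply, Submodule.Quotient.eq]
        have : ((⟨r • w, N.smul_mem r hwN⟩ : N) - n : N) = ⟨r • w - n, by
          exact Submodule.sub_mem N (N.smul_mem r hwN) n.2⟩ := rfl
        rw [hU'def]
        show (((⟨r • w, N.smul_mem r hwN⟩ : N) - n : N) : W) ∈ m.domain
        have hval : (((⟨r • w, N.smul_mem r hwN⟩ : N) - n : N) : W) = r • w - (n : W) := rfl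
        rw [hval, ← hsum]
        have : r • w - (uu + r • w) = -uu := by abel
        rw [this]
        exact m.domain.neg_mem huu
      set aI : Ideal R := m.domain.comap (LinearMap.toSpanSingleton R W w) with haIdef
      have hkerρ : LinearMap.ker ρ = aI := by
        ext r
        rw [LinearMap.mem_ker, hρval, Submodule.mkQ_apply, Submodule.Quotient.mk_eq_zero]
        show (⟨r • w, N.smul_mem r hwN⟩ : N) ∈ U' ↔ _
        rw [hU'def]
        show r • w ∈ m.domain ↔ r ∈ aI
        rw [haIdef]
        simp [Submodule.mem_comap, LinearMap.toSpanSingleton_apply]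
      have hlt : p < aI := by
        obtain ⟨x, hxp, hxw⟩ := Htor w
        have hxa : x ∈ aI := by
          rw [haIdef]
          simp only [Submodule.mem_comap, LinearMap.toSpanSingleton_apply, hxw]
          exact m.domain.zero_mem
        have hle : p ≤ aI := by
          intro z hz
          rw [haIdef]
          simp only [Submodule.mem_comap, LinearMap.toSpanSingleton_apply, H0 z hz w]
          exact m.domain.zero_mem
        exact lt_of_le_of_ne hle (fun h => hxp (h ▸ hxa))
      have e : (R ⧸ aI) ≃ₗ[R] (↥N ⧸ U') :=
        (Submodule.quotEquivOfEq aI (LinearMap.ker ρ) hkerρ.symm).trans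
          (ρ.quotKerEquivOfSurjective hρ)
      have hlftNQ : Lft I (b + 1) b (↥N ⧸ U') := lft_equiv e.symm (HP aI hlt b)
      obtain ⟨μ, hμ⟩ := hlftNQ χ
      set ψ' : ↥N →ₗ[R] I.X (b + 1) := η ∘ₗ N.subtype + μ ∘ₗ U'.mkQ with hψ'def
      have hmem_s : (⟨N, ψ'⟩ : W →ₗ.[R] I.X (b + 1)) ∈ s := by
        intro x
        show D (ψ' x) = φ (x : W)
        have h1 : D (μ (U'.mkQ x)) = χ (U'.mkQ x) := LinearMap.congr_fun hμ (U'.mkQ x)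
        have h2 : χ (U'.mkQ x) = cmap ((x : ↥N) : W) := rfl
        show D (η ((x : ↥N) : W) + μ (U'.mkQ x)) = φ ((x : ↥N) : W)
        rw [map_add, h1, h2]
        show D (η _) + (φ _ - D (η _)) = φ _
        abel
      have hle : m ≤ (⟨N, ψ'⟩ : W →ₗ.[R] I.X (b + 1)) := by
        refine ⟨hmN, ?_⟩
        rintro x y hxy
        show m.toFun x = ψ' y
        have hyU : (y : W) ∈ m.domain := hxy ▸ x.2
        have hyU' : (y : ↥N) ∈ U' := hyU
        have h1 : U'.mkQ y = 0 := (Submodule.Quotient.mk_eq_zero U').mpr hyU'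
        show m.toFun x = η ((y : ↥N) : W) + μ (U'.mkQ y)
        rw [h1, map_zero, add_zero, hη' _ hyU]
        congr 1
        exact Subtype.ext hxy
      have hcontra := hmax.2 hmem_s hle
      exact hw (hcontra.1 hwN)
    set inc : W →ₗ[R] m.domain :=
      LinearMap.codRestrict m.domain LinearMap.id (fun x => by rw [htop]; trivial) with hinc
    refine ⟨m.toFun ∘ₗ inc, LinearMap.ext fun x => ?_⟩
    exact hmax.1 (inc x)
  · -- chains have upper bounds
    intro c hcs hchain y hy
    have hdir : DirectedOn (· ≤ ·) c := hchain.directedOn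
    refine ⟨LinearPMap.sSup c hdir, ?_, fun z hz => LinearPMap.le_sSup hdir hz⟩
    intro x
    have hdir' : DirectedOn (· ≤ ·) (LinearPMap.domain '' c) :=
      directedOn_image.2 (hdir.mono @(LinearPMap.domain_mono.monotone))
    have hx2 : (x : W) ∈ sSup (LinearPMap.domain '' c) := x.2
    rw [Submodule.mem_sSup_of_directed (Set.Nonempty.image _ ⟨y, hy⟩) hdir'] at hx2
    obtain ⟨dom, ⟨l, hlc, rfl⟩, hxl⟩ := hx2
    have happ := LinearPMap.sSup_apply hdir hlc ⟨(x : W), hxl⟩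
    have hxeq : (⟨((⟨(x : W), hxl⟩ : l.domain) : W),
        (LinearPMap.le_sSup hdir hlc).1 (⟨(x : W), hxl⟩ : l.domain).2⟩ :
        (LinearPMap.sSup c hdir).domain) = x := Subtype.ext rfl
    rw [hxeq] at happ
    rw [happ]
    exact hcs hlc ⟨(x : W), hxl⟩

end Torsion

section Tensor

variable {I : ChainComplex (ModuleCat.{u} R) ℤ}

theorem inj_of_retract {M N : Type u} [AddCommGroup M] [Module R M] [AddCommGroup N] [Module R N]
    (i : M →ₗ[R] N) (r' : N →ₗ[R] M) (hir : ∀ n, i (r' n) = n) (h : Module.Injective R M) :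
    Module.Injective R N := by
  constructor
  intro X Y _ _ _ _ f hf g
  obtain ⟨e', he'⟩ := h.out f hf (r' ∘ₗ g)
  refine ⟨i ∘ₗ e', fun x => ?_⟩
  have := he' x
  simp only [LinearMap.comp_apply] at this ⊢
  rw [this, hir]

theorem lft_tensor {b : ℤ} (S' : Type u) [AddCommGroup S'] [Module R S']
    (κ : Type u) [AddCommGroup κ] [Module R κ]
    (hS : Lft I (b + 1) b S')
    (hker1 : Module.Injective R (S' →ₗ[R] Zc I (b + 1))) :
    Lft I (b + 1) b (TensorProduct R κ S') := by
  set D := dRes I (b + 1) b with hDdef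
  set π : (S' →ₗ[R] I.X (b + 1)) →ₗ[R] (S' →ₗ[R] Zc I b) :=
    LinearMap.llcomp R S' (I.X (b + 1)) (Zc I b) D with hπdef
  have hπapp : ∀ (g : S' →ₗ[R] I.X (b + 1)) (x : S'), (π g) x = D (g x) := fun g x => rfl
  have hπs : Function.Surjective π := by
    intro φ₀
    obtain ⟨ψ, hψ⟩ := hS φ₀
    exact ⟨ψ, hψ⟩
  have hKmem : ∀ f : S' →ₗ[R] I.X (b + 1), f ∈ LinearMap.ker π ↔
      ∀ x : S', f x ∈ Zc I (b + 1) := by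
    intro f
    rw [LinearMap.mem_ker]
    constructor
    · intro h x
      rw [Zc_succ I b, LinearMap.mem_ker]
      exact congrArg Subtype.val (LinearMap.congr_fun h x)
    · intro h
      ext x
      have hx := h x
      rw [Zc_succ I b, LinearMap.mem_ker] at hx
      exact hx
  let fwd : (S' →ₗ[R] Zc I (b + 1)) →ₗ[R] LinearMap.ker π :=
    LinearMap.codRestrict (LinearMap.ker π)
      (LinearMap.llcomp R S' (Zc I (b + 1)) (I.X (b + 1)) (Zc I (b + 1)).subtype)
      (fun g => (hKmem _).mpr (fun x => (g x).2))
  let bwd : LinearMap.ker π →ₗ[R] (S' →ₗ[R] Zc I (b + 1)) :=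
    { toFun := fun f => LinearMap.codRestrict (Zc I (b + 1)) f.1 ((hKmem f.1).mp f.2)
      map_add' := fun f g => by ext x; rfl
      map_smul' := fun c f => by ext x; rfl }
  have hinjK : Module.Injective R (LinearMap.ker π) := by
    refine inj_of_retract fwd bwd (fun f => ?_) hker1
    apply Subtype.ext
    ext x
    rfl
  obtain ⟨rK, hrK⟩ := Module.Injective.extension_property R (LinearMap.ker π)
    (LinearMap.ker π) (S' →ₗ[R] I.X (b + 1)) (LinearMap.ker π).subtype
    (LinearMap.ker π).injective_subtype LinearMap.id (inj := hinjK)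
  set pm : (S' →ₗ[R] I.X (b + 1)) →ₗ[R] (S' →ₗ[R] I.X (b + 1)) :=
    LinearMap.id - (LinearMap.ker π).subtype ∘ₗ rK with hpmdef
  have hkerle : LinearMap.ker π ≤ LinearMap.ker pm := by
    intro f hf
    have h1 : rK ((LinearMap.ker π).subtype ⟨f, hf⟩) = ⟨f, hf⟩ :=
      LinearMap.congr_fun hrK ⟨f, hf⟩
    rw [LinearMap.mem_ker, hpmdef]
    show f - (LinearMap.ker π).subtype (rK f) = 0
    have h2 : rK f = ⟨f, hf⟩ := h1
    rw [h2]
    show f - f = 0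
    rw [sub_self]
  set e' := π.quotKerEquivOfSurjective hπs with he'def
  set sec : (S' →ₗ[R] Zc I b) →ₗ[R] (S' →ₗ[R] I.X (b + 1)) :=
    ((LinearMap.ker π).liftQ pm hkerle) ∘ₗ (e'.symm : (S' →ₗ[R] Zc I b) →ₗ[R] _) with hsecdef
  have hsec : ∀ x, π (sec x) = x := by
    intro x
    obtain ⟨f, rfl⟩ := hπs x
    have h1 : e'.symm (π f) = Submodule.Quotient.mk f := by
      rw [LinearEquiv.symm_apply_eq, he'def]
      simp [LinearMap.quotKerEquivOfSurjective, LinearMap.quotKerEquivRange_apply_mk]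
    have h2 : sec (π f) = pm f := by
      rw [hsecdef]
      show ((LinearMap.ker π).liftQ pm hkerle) (e'.symm (π f)) = pm f
      rw [h1]
      rfl
    rw [h2, hpmdef]
    show π (f - (LinearMap.ker π).subtype (rK f)) = π f
    rw [map_sub]
    have h3 : π ((LinearMap.ker π).subtype (rK f)) = 0 := LinearMap.mem_ker.mp (rK f).2
    rw [h3, sub_zero]
  intro φ
  set φc := TensorProduct.curry φ with hφcdef
  refine ⟨TensorProduct.lift (sec ∘ₗ φc), ?_⟩
  apply TensorProduct.ext'
  intro cc ss
  show D (TensorProduct.lift (sec ∘ₗ φc) (cc ⊗ₜ ss)) = φ (cc ⊗ₜ ss)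
  rw [TensorProduct.lift.tmul]
  show D ((sec (φc cc)) ss) = φ (cc ⊗ₜ ss)
  have h3 := LinearMap.congr_fun (hsec (φc cc)) ss
  exact h3

end Tensor

section VectorSpace

variable {I : ChainComplex (ModuleCat.{u} R) ℤ}

theorem lft_kappa_of_nonzero {a b : ℤ} (κ : Type u) [Field κ] [Algebra R κ]
    (X : Type u) [AddCommGroup X] [Module R X] [Module κ X] [IsScalarTower R κ X]
    [Nontrivial X] (hX : Lft I a b X) : Lft I a b κ := by
  obtain ⟨x, hx⟩ := exists_ne (0 : X)
  set i : κ →ₗ[κ] X := LinearMap.toSpanSingleton κ X x with hidef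
  have hi : Function.Injective i := by
    intro c₁ c₂ h
    by_contra hne
    have hc : c₁ - c₂ ≠ 0 := sub_ne_zero.mpr hne
    have h0 : (c₁ - c₂) • x = 0 := by
      rw [sub_smul]
      have h1 : i c₁ = i c₂ := h
      rw [hidef] at h1
      simp only [LinearMap.toSpanSingleton_apply] at h1
      rw [h1, sub_self]
    have h2 : x = (c₁ - c₂)⁻¹ • ((c₁ - c₂) • x) := by
      rw [smul_smul, inv_mul_cancel₀ hc, one_smul]
    rw [h0, smul_zero] at h2
    exact hx h2
  obtain ⟨q', hq'⟩ := Submodule.exists_isCompl (LinearMap.range i)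
  set proj := (LinearMap.range i).linearProjOfIsCompl q' hq' with hprojdef
  set eI := LinearEquiv.ofInjective i hi with heIdef
  set r : X →ₗ[κ] κ := eI.symm.toLinearMap ∘ₗ proj with hrdef
  have hri : ∀ c : κ, r (i c) = c := by
    intro c
    have h2 : i c = ((eI c : LinearMap.range i) : X) := (LinearEquiv.ofInjective_apply i c).symm
    have h1 : proj (i c) = eI c := by
      rw [h2]
      exact Submodule.linearProjOfIsCompl_apply_left hq' (eI c)
    show eI.symm (proj (i c)) = c
    rw [h1, LinearEquiv.symm_apply_apply]
  exact lft_retract (i.restrictScalars R) (r.restrictScalars R)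
    (LinearMap.ext fun c => hri c) hX

theorem lft_vs {a b : ℤ} (κ : Type u) [Field κ] [Algebra R κ] (hκ : Lft I a b κ)
    (V : Type u) [AddCommGroup V] [Module R V] [Module κ V] [IsScalarTower R κ V] :
    Lft I a b V := by
  have e := (Module.Basis.ofVectorSpace κ V).repr
  exact lft_equiv (e.restrictScalars R) (lft_finsupp _ hκ)

end VectorSpace

section Main

variable {I : ChainComplex (ModuleCat.{u} R) ℤ}
variable (S : Type u) [CommRing S] [Algebra R S] [Module.FaithfullyFlat R S]

theorem lft_all [IsNoetherianRing R]
    (hIac : isAcyclic I) (hinj : ∀ n : ℤ, Injective (I.X n))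
    (hS : ∀ m : ℤ, Lft I (m + 1) m S)
    (hker : ∀ n : ℤ, Module.Injective R (S →ₗ[R] Zc I n)) :
    ∀ (bI : Ideal R) (W : Type u) [AddCommGroup W] [Module R W],
      (∀ x ∈ bI, ∀ w : W, x • w = 0) → ∀ m : ℤ, Lft I (m + 1) m W := by
  have wf : WellFounded ((· > ·) : Ideal R → Ideal R → Prop) :=
    (inferInstance : WellFoundedGT (Ideal R)).wf
  intro bI
  refine wf.induction (C := fun c => ∀ (W : Type u) [AddCommGroup W] [Module R W],
      (∀ x ∈ c, ∀ w : W, x • w = 0) → ∀ m : ℤ, Lft I (m + 1) m W) bI ?_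
  clear bI
  intro bI IH W _ _ HW m
  -- the induction hypothesis, in the form used below
  have IH' : ∀ c : Ideal R, bI < c → ∀ m' : ℤ, Lft I (m' + 1) m' (R ⧸ c) := by
    intro c hc m'
    refine IH c hc (R ⧸ c) ?_ m'
    intro z hz q
    obtain ⟨r, rfl⟩ := Submodule.Quotient.mk_surjective c q
    rw [← Submodule.Quotient.mk_smul, Submodule.Quotient.mk_eq_zero]
    show z • r ∈ c
    rw [smul_eq_mul]
    exact Ideal.mul_mem_right r c hz
  by_cases htop : (1 : R) ∈ bI
  · haveI : Subsingleton W := ⟨fun w₁ w₂ => by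
      have h1 := HW 1 htop w₁
      have h2 := HW 1 htop w₂
      rw [one_smul] at h1 h2
      rw [h1, h2]⟩
    exact lft_subsingleton
  by_cases hp : bI.IsPrime
  · -- prime case
    -- torsion submodule
    set T : Submodule R W :=
      { carrier := {w | ∃ x, x ∉ bI ∧ x • w = 0}
        add_mem' := by
          rintro w₁ w₂ ⟨x₁, hx₁, h₁⟩ ⟨x₂, hx₂, h₂⟩
          refine ⟨x₁ * x₂, fun hmem => ((hp.mem_or_mem hmem).elim hx₁ hx₂), ?_⟩
          rw [smul_add]
          rw [show x₁ * x₂ = x₂ * x₁ from mul_comm _ _, mul_smul, h₁, smul_zero]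
          rw [mul_comm, mul_smul, h₂, smul_zero, add_zero]
        zero_mem' := ⟨1, (Ideal.ne_top_iff_one bI).mp hp.ne_top, smul_zero 1⟩
        smul_mem' := by
          rintro c w ⟨x, hx, h⟩
          exact ⟨x, hx, by rw [smul_comm, h, smul_zero]⟩ } with hTdef
    have hTlft : ∀ m' : ℤ, Lft I (m' + 1) m' T := by
      intro m'
      refine lft_torsion hIac hinj bI hp ?_ ?_ IH' m'
      · intro x hx t
        apply Subtype.ext
        exact HW x hx t.1
      · rintro ⟨t, ⟨x, hx, hxt⟩⟩
        exact ⟨x, hx, Subtype.ext hxt⟩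
    set Wb := W ⧸ T with hWbdef
    have HWb : ∀ x ∈ bI, ∀ w : Wb, x • w = 0 := by
      intro x hx w
      obtain ⟨v, rfl⟩ := Submodule.Quotient.mk_surjective T w
      rw [← Submodule.Quotient.mk_smul, HW x hx v, Submodule.Quotient.mk_zero]
    have hTF2 : ∀ x, x ∉ bI → ∀ wb : Wb, x • wb = 0 → wb = 0 := by
      intro x hx wb hxwb
      obtain ⟨v, rfl⟩ := Submodule.Quotient.mk_surjective T wb
      rw [← Submodule.Quotient.mk_smul, Submodule.Quotient.mk_eq_zero] at hxwb
      obtain ⟨y, hy, hyx⟩ := hxwb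
      rw [Submodule.Quotient.mk_eq_zero]
      refine ⟨y * x, fun hmem => ((hp.mem_or_mem hmem).elim hy hx), ?_⟩
      rw [mul_smul]
      exact hyx
    -- the localized module
    set A := Localization.AtPrime bI with hAdef
    set V := LocalizedModule bI.primeCompl Wb with hVdef
    set κ := IsLocalRing.ResidueField A with hκdef
    have hVkill : ∀ x ∈ bI, ∀ v : V, x • v = 0 := by
      intro x hx v
      induction v using LocalizedModule.induction_on with
      | h w s =>
        rw [LocalizedModule.smul'_mk, HWb x hx w, LocalizedModule.zero_mk]
    have hTorV : Module.IsTorsionBySet A V ↑(IsLocalRing.maximalIdeal A) := by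
      intro v a
      obtain ⟨z, hz⟩ := a
      show z • v = 0
      rw [← Localization.AtPrime.map_eq_maximalIdeal] at hz
      rw [Ideal.map] at hz
      refine Submodule.span_induction ?_ ?_ ?_ ?_ hz
      · rintro zz ⟨r, hr, rfl⟩
        rw [algebraMap_smul]
        exact hVkill r hr v
      · rw [zero_smul]
      · intro z₁ z₂ h₁ h₂ hz₁ hz₂
        rw [add_smul, hz₁, hz₂, add_zero]
      · intro c z₁ h₁ hz₁
        rw [smul_eq_mul, mul_smul, hz₁, smul_zero]
    letI : Module κ V := hTorV.module
    haveI : IsScalarTower R κ V := Module.IsTorsionBySet.isScalarTower hTorV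
    have hκlft : ∀ m' : ℤ, Lft I (m' + 1) m' κ := by
      intro m'
      haveI : Nontrivial (TensorProduct R κ S) :=
        Module.FaithfullyFlat.rTensor_nontrivial R S κ
      exact lft_kappa_of_nonzero κ (TensorProduct R κ S)
        (lft_tensor S κ (hS m') (hker (m' + 1)))
    have hVlft : ∀ m' : ℤ, Lft I (m' + 1) m' V := fun m' => lft_vs κ (hκlft m') V
    set ι := LocalizedModule.mkLinearMap bI.primeCompl Wb with hιdef
    set CC := V ⧸ LinearMap.range ι with hCCdef
    have hClft : ∀ m' : ℤ, Lft I (m' + 1) m' CC := by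
      intro m'
      refine lft_torsion hIac hinj bI hp ?_ ?_ IH' m'
      · intro x hx c
        obtain ⟨v, rfl⟩ := Submodule.Quotient.mk_surjective _ c
        rw [← Submodule.Quotient.mk_smul, hVkill x hx v, Submodule.Quotient.mk_zero]
      · intro c
        obtain ⟨v, rfl⟩ := Submodule.Quotient.mk_surjective _ c
        induction v using LocalizedModule.induction_on with
        | h w s =>
          refine ⟨s.1, s.2, ?_⟩
          rw [← Submodule.Quotient.mk_smul, Submodule.Quotient.mk_eq_zero]
          have h1 : s.1 • LocalizedModule.mk w s = LocalizedModule.mk w 1 := by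
            rw [LocalizedModule.smul'_mk]
            exact LocalizedModule.mk_cancel s w
          rw [h1]
          exact ⟨w, rfl⟩
    have hι : Function.Injective ι := by
      intro w₁ w₂ hww
      have h0 : LocalizedModule.mk (w₁ - w₂) (1 : bI.primeCompl) = LocalizedModule.mk 0 1 := by
        have : ι (w₁ - w₂) = 0 := by rw [map_sub, hww, sub_self]
        rw [hιdef] at this
        simpa [LocalizedModule.mkLinearMap_apply] using this
      rw [LocalizedModule.mk_eq] at h0
      obtain ⟨u, hu⟩ := h0
      simp only [one_smul, smul_zero] at hu
      have := hTF2 u.1 u.2 (w₁ - w₂) hu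
      exact sub_eq_zero.mp this
    have hWblft : ∀ m' : ℤ, Lft I (m' + 1) m' Wb := by
      intro m'
      refine lft_equiv (X := ↥(LinearMap.range ι)) (LinearEquiv.ofInjective ι hι) ?_
      refine lft_amb_quot (LinearMap.range ι) (hinj m') (hVlft m') ?_
      have := hClft (m' - 1)
      rwa [sub_add_cancel] at this
    exact lft_sub_quot T (hinj (m + 1)) (hTlft m) (hWblft m)
  · -- non-prime, non-top case
    have hnt : bI ≠ ⊤ := fun h => htop (h ▸ Submodule.mem_top)
    obtain ⟨x, y, hxy, hx, hy⟩ : ∃ x y, x * y ∈ bI ∧ x ∉ bI ∧ y ∉ bI := by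
      rw [Ideal.isPrime_iff] at hp
      push_neg at hp
      obtain ⟨x, y, h1, h2, h3⟩ := hp hnt
      exact ⟨x, y, h1, h2, h3⟩
    set U : Submodule R W := LinearMap.ker (LinearMap.lsmul R W x) with hUdef
    have hxlt : bI < bI ⊔ Ideal.span {x} := by
      refine lt_of_le_of_ne le_sup_left (fun h => hx ?_)
      rw [h]
      exact Submodule.mem_sup_right (Ideal.subset_span rfl)
    have hylt : bI < bI ⊔ Ideal.span {y} := by
      refine lt_of_le_of_ne le_sup_left (fun h => hy ?_)
      rw [h]
      exact Submodule.mem_sup_right (Ideal.subset_span rfl)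
    have hUkill : ∀ z ∈ bI ⊔ Ideal.span {x}, ∀ u : U, z • u = 0 := by
      intro z hz u
      rw [Submodule.mem_sup] at hz
      obtain ⟨v, hv, t, ht, rfl⟩ := hz
      obtain ⟨r, rfl⟩ := Ideal.mem_span_singleton'.mp ht
      apply Subtype.ext
      show (v + r * x) • (u : W) = 0
      rw [add_smul, HW v hv, mul_smul]
      have hux : x • (u : W) = 0 := u.2
      rw [hux, smul_zero, add_zero]
    have hQkill : ∀ z ∈ bI ⊔ Ideal.span {y}, ∀ q : W ⧸ U, z • q = 0 := by
      intro z hz q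
      rw [Submodule.mem_sup] at hz
      obtain ⟨v, hv, t, ht, rfl⟩ := hz
      obtain ⟨r, rfl⟩ := Ideal.mem_span_singleton'.mp ht
      obtain ⟨w, rfl⟩ := Submodule.Quotient.mk_surjective U q
      rw [← Submodule.Quotient.mk_smul, add_smul, HW v hv, zero_add, mul_smul]
      rw [Submodule.Quotient.mk_eq_zero]
      refine U.smul_mem r ?_
      show x • (y • w) = 0
      rw [← mul_smul]
      exact HW (x * y) hxy w
    have h1 := IH _ hxlt U hUkill m
    have h2 := IH _ hylt (W ⧸ U) hQkill m
    exact lft_sub_quot U (hinj (m + 1)) h1 h2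

end Main

end HomAcyclicAux

/-- Let `R` be a commutative noetherian ring and `S` a faithfully flat (commutative)
`R`-algebra of finite projective dimension as an `R`-module.  Let `I` be an acyclic
complex of injective `R`-modules such that the complex `Hom_R(S,I)` is acyclic and the
`R`-module `Hom_R(S, Ker ∂_n^I)` is injective for every `n ∈ ℤ`.  Then the complex
`Hom_R(M,I)` is acyclic for every `R`-module `M`. -/
theorem homComplex_acyclic_of_homS_acyclic
    (R : Type u) [CommRing R] [IsNoetherianRing R]
    (S : Type u) [CommRing S] [Algebra R S] [Module.FaithfullyFlat R S]
    (hpdS : ∃ n : ℕ, projResBddAbove R (ModuleCat.of R S) n)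
    (I : ChainComplex (ModuleCat.{u} R) ℤ)
    (hinj : ∀ n : ℤ, Injective (I.X n))
    (hIac : isAcyclic I)
    (hSIac : isAcyclic (homComplex (ModuleCat.of R S) I))
    (hker : ∀ n : ℤ, Module.Injective R (S →ₗ[R] ↥(LinearMap.ker (I.d n (n - 1)).hom))) :
    ∀ M : ModuleCat.{u} R, isAcyclic (homComplex M I) := by
  intro M i
  have hS : ∀ m : ℤ, HomAcyclicAux.Lft I (m + 1) m S := fun m =>
    (HomAcyclicAux.exactAt_homComplex_iff I (ModuleCat.of R S) m).mp (hSIac m)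
  have hkerZ : ∀ n : ℤ, Module.Injective R (S →ₗ[R] HomAcyclicAux.Zc I n) := hker
  have hall := HomAcyclicAux.lft_all S hIac hinj hS hkerZ ⊥ (M : Type u)
    (fun x hx w => by rw [(Submodule.mem_bot R).mp hx, zero_smul])
  exact (HomAcyclicAux.exactAt_homComplex_iff I M i).mpr (hall i)
end

section
/- Let R be a commutative ring, S a faithfully flat R-algebra, and E an injective R-module. Then the natural map E → S ⊗_R E, e ↦ 1 ⊗ e, is a split monomorphism of R-modules; in particular E is a direct summand of S ⊗_R E. -/
universe u

/-- Let `R` be a commutative ring, `S` a faithfully flat (commutative) `R`-algebra, and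
`E` an injective `R`-module.  Then the natural map `E → S ⊗_R E`, `e ↦ 1 ⊗ e`, is a split
monomorphism of `R`-modules: it admits an `R`-linear retraction.  In particular `E` is a
direct summand of `S ⊗_R E`. -/
theorem injective_split_mono_tensor
    (R : Type u) [CommRing R] (S : Type u) [CommRing S] [Algebra R S]
    [Module.FaithfullyFlat R S]
    (E : Type u) [AddCommGroup E] [Module R E] (hE : Module.Injective R E) :
    ∃ g : TensorProduct R S E →ₗ[R] E,
      g.comp (TensorProduct.mk R S E 1) = LinearMap.id := by
  have hinj : Function.Injective (TensorProduct.mk R S E 1) := by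
    rw [injective_iff_map_eq_zero]
    intro e he
    have he' : (1 : S) ⊗ₜ[R] e = 0 := he
    set φ : R →ₗ[R] E := LinearMap.toSpanSingleton R E e with hφdef
    have hφ : LinearMap.lTensor S φ = 0 := by
      apply TensorProduct.ext'
      intro s r
      have hse : s ⊗ₜ[R] e = 0 := by
        rw [show s ⊗ₜ[R] e = s • ((1 : S) ⊗ₜ[R] e) by
          rw [TensorProduct.smul_tmul', smul_eq_mul, mul_one], he', smul_zero]
      simp only [LinearMap.lTensor_tmul, LinearMap.zero_apply,
        LinearMap.toSpanSingleton_apply, φ, TensorProduct.tmul_smul, hse, smul_zero]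
    have hφ0 : φ = 0 := (Module.FaithfullyFlat.zero_iff_lTensor_zero R S φ).mpr hφ
    have h1 := LinearMap.congr_fun hφ0 1
    simpa [φ] using h1
  obtain ⟨g, hg⟩ := hE.out (TensorProduct.mk R S E 1) hinj LinearMap.id
  exact ⟨g, LinearMap.ext fun e => hg e⟩
end

section
/- Let R be a commutative noetherian ring, S a faithfully flat R-algebra, d a nonnegative integer bounding the projective dimension of every flat R-module, and N an R-module with Hom_R(S,N) injective over R and Ext_R^n(S,N) = 0 for all n > 0. Let 0 → N → E^0 → E^1 → ⋯ be an injective resolution of N and let K be the d-th cosyzygy, i.e., the kernel of E^d → E^{d+1}. Then K is a cotorsion R-module and Hom_R(S,K) is an injective R-module. -/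
/-!
Common definitions: `extmod R M N n` is the `n`-th Ext module `Ext_R^n(M,N)`.
-/

open CategoryTheory

universe u

/-- `Ext_R^n(M,N)`, the `n`-th Ext of the `R`-modules `M` and `N`, as an object of
`ModuleCat R`. -/
noncomputable def extmod (R : Type u) [CommRing R] (M N : Type u) [AddCommGroup M] [Module R M]
    [AddCommGroup N] [Module R N] (n : ℕ) : ModuleCat.{u} R :=
  ((Ext R (ModuleCat.{u} R) n).obj (Opposite.op (ModuleCat.of R M))).obj (ModuleCat.of R N)


/-- An `R`-module `C` is *cotorsion* if `Ext_R^1(F,C) = 0` for every flat `R`-module `F`. -/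
def Cotorsion (R : Type u) [CommRing R] (C : Type u) [AddCommGroup C] [Module R C] : Prop :=
  ∀ (F : Type u) [AddCommGroup F] [Module R F], Module.Flat R F →
    Subsingleton (extmod R F C 1)

open Limits TensorProduct

section Aux

variable {R : Type u} [CommRing R]

/-- Postcomposition, as a morphism of Hom complexes. -/
@[simps]
noncomputable def homMap (P : ChainComplex (ModuleCat.{u} R) ℕ) {A B : ModuleCat.{u} R}
    (f : A ⟶ B) : P.linearYonedaObj R A ⟶ P.linearYonedaObj R B where
  f n := ModuleCat.ofHom (Linear.rightComp R (P.X n) f)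
  comm' i j _ := by
    ext φ
    exact (Category.assoc (P.d j i) (φ : P.X i ⟶ A) f).symm

lemma homMap_comp (P : ChainComplex (ModuleCat.{u} R) ℕ) {A B C : ModuleCat.{u} R}
    (f : A ⟶ B) (g : B ⟶ C) : homMap P (f ≫ g) = homMap P f ≫ homMap P g := by
  ext n φ
  exact (Category.assoc (φ : P.X n ⟶ A) f g).symm

lemma homMap_id (P : ChainComplex (ModuleCat.{u} R) ℕ) (A : ModuleCat.{u} R) :
    homMap P (𝟙 A) = 𝟙 _ := by
  ext n φ
  exact Category.comp_id (φ : P.X n ⟶ A)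

/-- The short exact sequence of Hom complexes `Hom(P,X₁) → Hom(P,X₂) → Hom(P,X₃)`. -/
noncomputable def homSES (P : ChainComplex (ModuleCat.{u} R) ℕ)
    (T : ShortComplex (ModuleCat.{u} R)) :
    ShortComplex (CochainComplex (ModuleCat.{u} R) ℕ) :=
  ShortComplex.mk (homMap P T.f) (homMap P T.g)
    (by rw [← homMap_comp, T.zero]; ext n φ
        exact Limits.comp_zero (f := (φ : P.X n ⟶ T.X₁)))

lemma homSES_shortExact (P : ChainComplex (ModuleCat.{u} R) ℕ)
    (hP : ∀ n, Projective (P.X n)) {T : ShortComplex (ModuleCat.{u} R)}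
    (hT : T.ShortExact) : (homSES P T).ShortExact := by
  rw [HomologicalComplex.shortExact_iff_degreewise_shortExact]
  intro n
  haveI := hT.mono_f
  haveI := hT.epi_g
  haveI := hP n
  refine ShortComplex.ShortExact.mk' ?_ ?_ ?_
  · rw [ShortComplex.moduleCat_exact_iff]
    intro (φ : P.X n ⟶ T.X₂) hφ
    replace hφ : φ ≫ T.g = 0 := hφ
    exact ⟨hT.exact.lift φ hφ, hT.exact.lift_f φ hφ⟩
  · rw [ModuleCat.mono_iff_injective]
    intro (φ : P.X n ⟶ T.X₁) (ψ : P.X n ⟶ T.X₁) h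
    replace h : φ ≫ T.f = ψ ≫ T.f := h
    exact (cancel_mono T.f).mp h
  · rw [ModuleCat.epi_iff_surjective]
    intro (φ : P.X n ⟶ T.X₃)
    exact ⟨Projective.factorThru φ T.g, (Projective.factorThru_comp φ T.g : _)⟩

lemma isZero_X₂_of_exact {T : ShortComplex (ModuleCat.{u} R)} (h : T.Exact)
    (h1 : IsZero T.X₁) (h3 : IsZero T.X₃) : IsZero T.X₂ := by
  rw [ShortComplex.moduleCat_exact_iff] at h
  have hall : ∀ x : T.X₂, x = 0 := by
    intro x
    have hg : T.g = 0 := h3.eq_of_tgt _ _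
    obtain ⟨y, hy⟩ := h x (by rw [hg]; rfl)
    have hf : T.f = 0 := h1.eq_of_src _ _
    rw [← hy, hf]
    rfl
  haveI : Subsingleton T.X₂ := ⟨fun a b => by rw [hall a, hall b]⟩
  exact ModuleCat.isZero_of_subsingleton _

/-- Positive homology of `Hom(P, E)` vanishes for `E` injective. -/
lemma isZero_homology_hom_injective {W : ModuleCat.{u} R} (P : ProjectiveResolution W)
    (E : ModuleCat.{u} R) [Injective E] (n : ℕ) :
    IsZero ((P.complex.linearYonedaObj R E).homology (n + 1)) := by
  rw [← HomologicalComplex.exactAt_iff_isZero_homology]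
  rw [HomologicalComplex.exactAt_iff' _ n (n + 1) (n + 2) (by simp) (by simp)]
  rw [ShortComplex.moduleCat_exact_iff]
  intro (φ : P.complex.X (n + 1) ⟶ E) (hφ : P.complex.d (n + 2) (n + 1) ≫ φ = 0)
  exact ⟨(P.exact_succ n).descToInjective φ hφ,
    (P.exact_succ n).comp_descToInjective φ hφ⟩

/-- Homology of `Hom(P, Y)` vanishes above the length of `P`. -/
lemma isZero_homology_hom_of_isZero {P : ChainComplex (ModuleCat.{u} R) ℕ} {m : ℕ}
    (hm : IsZero (P.X m)) (Y : ModuleCat.{u} R) :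
    IsZero ((P.linearYonedaObj R Y).homology m) := by
  rw [← HomologicalComplex.exactAt_iff_isZero_homology, HomologicalComplex.exactAt_iff]
  refine ShortComplex.exact_of_isZero_X₂ _ ?_
  haveI : Subsingleton ((P.linearYonedaObj R Y).X m) :=
    ⟨fun (a : P.X m ⟶ Y) (b : P.X m ⟶ Y) => hm.eq_of_src a b⟩
  exact ModuleCat.isZero_of_subsingleton ((P.linearYonedaObj R Y).X m)

/-- Dimension shifting: from a SES `0 → X₁ → X₂ → X₃ → 0`. -/
lemma isZero_homology_shift {W : ModuleCat.{u} R} (P : ProjectiveResolution W)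
    {T : ShortComplex (ModuleCat.{u} R)} (hT : T.ShortExact) (n : ℕ)
    (h1 : IsZero ((P.complex.linearYonedaObj R T.X₂).homology n))
    (h3 : IsZero ((P.complex.linearYonedaObj R T.X₁).homology (n + 1))) :
    IsZero ((P.complex.linearYonedaObj R T.X₃).homology n) := by
  have hT' := homSES_shortExact P.complex P.projective hT
  have ex := hT'.homology_exact₃ n (n + 1) (by simp)
  exact isZero_X₂_of_exact ex h1 h3

lemma exists_lift_of_isZero_homology_one {W : ModuleCat.{u} R} (P : ProjectiveResolution W)
    {T : ShortComplex (ModuleCat.{u} R)} (hT : T.ShortExact)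
    (hvan : IsZero ((P.complex.linearYonedaObj R T.X₁).homology 1)) (f : W ⟶ T.X₃) :
    ∃ ψ : W ⟶ T.X₂, ψ ≫ T.g = f := by
  have hT' := homSES_shortExact P.complex P.projective hT
  have ex := hT'.homology_exact₃ 0 1 (by simp)
  have hδ : hT'.δ 0 1 (by simp) = 0 := hvan.eq_of_tgt _ _
  haveI hepi : Epi (HomologicalComplex.homologyMap (homSES P.complex T).g 0) := ex.epi_f hδ
  have hcomm := HomologicalComplex.homologyπ_naturality (homSES P.complex T).g 0
  haveI : Epi (HomologicalComplex.cyclesMap (homSES P.complex T).g 0) := by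
    have heq : HomologicalComplex.cyclesMap (homSES P.complex T).g 0 =
        ((homSES P.complex T).X₂.homologyπ 0 ≫
            HomologicalComplex.homologyMap (homSES P.complex T).g 0) ≫
          inv ((homSES P.complex T).X₃.homologyπ 0) := by
      rw [hcomm]
      simp
    rw [heq]
    infer_instance
  have hsurj := (ModuleCat.epi_iff_surjective
    (HomologicalComplex.cyclesMap (homSES P.complex T).g 0)).mp this
  -- the cocycle corresponding to `f`
  set φ : P.complex.X 0 ⟶ T.X₃ := P.π.f 0 ≫ f with hφdef
  have hφd : P.complex.d 1 0 ≫ φ = 0 := by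
    rw [hφdef]
    exact (Category.assoc _ _ _).symm.trans (by rw [P.complex_d_comp_π_f_zero]; exact zero_comp)
  have hx : ((forget₂ (ModuleCat.{u} R) Ab).map ((homSES P.complex T).X₃.d 0 1)) φ = 0 := hφd
  set c₃ := (homSES P.complex T).X₃.cyclesMk (φ : (forget₂ (ModuleCat.{u} R) Ab).obj ((homSES P.complex T).X₃.X 0)) 1 (by simp) hx with hc₃
  obtain ⟨c₂, hc₂⟩ := hsurj c₃
  set ψ0 : P.complex.X 0 ⟶ T.X₂ := ((homSES P.complex T).X₂.iCycles 0) c₂ with hψ0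
  have h1 : P.complex.d 1 0 ≫ ψ0 = 0 := by
    have h := HomologicalComplex.iCycles_d (homSES P.complex T).X₂ 0 1
    have := ConcreteCategory.congr_hom h c₂
    exact this
  have h2 : ψ0 ≫ T.g = φ := by
    have h := HomologicalComplex.cyclesMap_i (homSES P.complex T).g 0
    have happ := ConcreteCategory.congr_hom h c₂
    have hi := HomologicalComplex.i_cyclesMk (homSES P.complex T).X₃
      (φ : (forget₂ (ModuleCat.{u} R) Ab).obj ((homSES P.complex T).X₃.X 0)) 1 (by simp) hx
    rw [← hc₃] at hi
    exact happ.symm.trans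
      ((congrArg (fun c => ((homSES P.complex T).X₃.iCycles 0) c) hc₂).trans hi)
  -- descend along `P.π.f 0`
  have hexact := P.exact₀
  haveI : Epi (ShortComplex.mk (P.complex.d 1 0) (P.π.f 0)
      P.complex_d_comp_π_f_zero).g := inferInstanceAs (Epi (P.π.f 0))
  refine ⟨hexact.desc ψ0 h1, ?_⟩
  have hgd := hexact.g_desc ψ0 h1
  have : P.π.f 0 ≫ hexact.desc ψ0 h1 ≫ T.g = P.π.f 0 ≫ f := by
    rw [← Category.assoc]
    erw [hgd]
    rw [h2, hφdef]
  exact (cancel_epi (P.π.f 0)).mp this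

/-- Transport of hom complexes along an isomorphism of targets. -/
noncomputable def homMapIso (P : ChainComplex (ModuleCat.{u} R) ℕ) {A B : ModuleCat.{u} R}
    (e : A ≅ B) : P.linearYonedaObj R A ≅ P.linearYonedaObj R B where
  hom := homMap P e.hom
  inv := homMap P e.inv
  hom_inv_id := by rw [← homMap_comp, e.hom_inv_id, homMap_id]
  inv_hom_id := by rw [← homMap_comp, e.inv_hom_id, homMap_id]

lemma injective_of_split {A B : ModuleCat.{u} R} [Injective B] (t : A ⟶ B) (g : B ⟶ A)
    (h : t ≫ g = 𝟙 A) : Injective A := by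
  constructor
  intro X Y u m hm
  obtain ⟨h', hh'⟩ := Injective.factors (u ≫ t) m
  exact ⟨h' ≫ g, by rw [← Category.assoc, hh', Category.assoc, h, Category.comp_id]⟩

lemma injective_of_linearEquiv {M N' : Type u} [AddCommGroup M] [Module R M]
    [AddCommGroup N'] [Module R N'] (e : M ≃ₗ[R] N') (hM : Module.Injective R M) :
    Module.Injective R N' := by
  constructor
  intro X Y _ _ _ _ f hf g
  obtain ⟨h, hh⟩ := hM.out f hf (e.symm.toLinearMap ∘ₗ g)
  refine ⟨e.toLinearMap ∘ₗ h, fun x => ?_⟩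
  simp [hh x]

/-- `Hom_R(F, E)` is injective when `F` is flat and `E` is injective. -/
lemma homFlatInjective (F E' : Type u) [AddCommGroup F] [Module R F] [Module.Flat R F]
    [AddCommGroup E'] [Module R E'] (hE : Module.Injective R E') :
    Module.Injective R (F →ₗ[R] E') := by
  haveI := hE
  apply Module.Baer.injective
  intro I g
  let G : (↥I ⊗[R] F) →ₗ[R] E' := TensorProduct.lift g
  let ι : (↥I ⊗[R] F) →ₗ[R] (R ⊗[R] F) := LinearMap.rTensor F (Submodule.subtype I)
  have hι : Function.Injective ι :=
    Module.Flat.rTensor_preserves_injective_linearMap _ (Submodule.injective_subtype I)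
  obtain ⟨h, hh⟩ := Module.Injective.extension_property R E' _ _ ι hι G
  refine ⟨TensorProduct.curry h ∘ₗ (LinearMap.id : R →ₗ[R] R), fun x mx => ?_⟩
  apply LinearMap.ext; intro y
  have := DFunLike.congr_fun hh (⟨x, mx⟩ ⊗ₜ[R] y)
  simpa [ι, G, LinearMap.rTensor_tmul] using this

section InjRes

variable {N : Type u} [AddCommGroup N] [Module R N]
variable (E : InjectiveResolution (ModuleCat.of R N))

/-- The `i`-th cosyzygy of the injective resolution. -/
noncomputable def Zm (i : ℕ) : ModuleCat.{u} R :=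
  ModuleCat.of R ↥(LinearMap.ker (E.cocomplex.d i (i + 1)).hom)

lemma d_mem_ker (i : ℕ) (x : ↥(E.cocomplex.X i)) :
    (E.cocomplex.d i (i + 1)) x ∈ LinearMap.ker (E.cocomplex.d (i + 1) (i + 2)).hom := by
  have h := E.cocomplex.d_comp_d i (i + 1) (i + 2)
  have := ConcreteCategory.congr_hom h x
  exact this

/-- The short exact sequence `0 → Z^i → E^i → Z^{i+1} → 0`. -/
noncomputable def ZmSES (i : ℕ) : ShortComplex (ModuleCat.{u} R) :=
  ShortComplex.mk
    (ModuleCat.ofHom (LinearMap.ker (E.cocomplex.d i (i + 1)).hom).subtype :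
      Zm E i ⟶ E.cocomplex.X i)
    (ModuleCat.ofHom (LinearMap.codRestrict _ (E.cocomplex.d i (i + 1)).hom (d_mem_ker E i)) :
      E.cocomplex.X i ⟶ Zm E (i + 1))
    (by
      apply ModuleCat.hom_ext
      apply LinearMap.ext
      rintro ⟨x, hx⟩
      exact Subtype.ext hx)

lemma ZmSES_shortExact (i : ℕ) : (ZmSES E i).ShortExact := by
  refine ShortComplex.ShortExact.mk' ?_ ?_ ?_
  · rw [ShortComplex.moduleCat_exact_iff]
    intro x hx
    have hx' : (E.cocomplex.d i (i + 1)) x = 0 := congrArg Subtype.val hx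
    exact ⟨⟨x, hx'⟩, rfl⟩
  · rw [ModuleCat.mono_iff_injective]
    exact Subtype.val_injective
  · rw [ModuleCat.epi_iff_surjective]
    rintro ⟨y, hy⟩
    have hex := E.cocomplex_exactAt_succ i
    rw [HomologicalComplex.exactAt_iff' _ i (i + 1) (i + 2) (by simp) (by simp)] at hex
    rw [ShortComplex.moduleCat_exact_iff] at hex
    obtain ⟨x, hx⟩ := hex y hy
    exact ⟨x, Subtype.ext hx⟩

/-- `N` is equivalent to the `0`-th cosyzygy. -/
noncomputable def eqN : N ≃ₗ[R] ↥(LinearMap.ker (E.cocomplex.d 0 (0 + 1)).hom) := by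
  have hmem : ∀ n : N, (E.ι.f 0) n ∈ LinearMap.ker (E.cocomplex.d 0 (0 + 1)).hom := by
    intro n
    have h := E.ι_f_zero_comp_complex_d
    exact ConcreteCategory.congr_hom h n
  refine LinearEquiv.ofBijective
    (LinearMap.codRestrict _ (E.ι.f 0 : ModuleCat.of R N ⟶ E.cocomplex.X 0).hom hmem) ⟨?_, ?_⟩
  · intro a b hab
    have hinj : Function.Injective (E.ι.f 0) := by
      rw [← ModuleCat.mono_iff_injective]
      infer_instance
    exact hinj (congrArg Subtype.val hab)
  · rintro ⟨x, hx⟩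
    have hex := E.exact₀
    rw [ShortComplex.moduleCat_exact_iff] at hex
    obtain ⟨n, hn⟩ := hex x hx
    exact ⟨n, Subtype.ext hn⟩

/-- `N` is isomorphic to the `0`-th cosyzygy. -/
noncomputable def isoN : ModuleCat.of R N ≅ Zm E 0 :=
  LinearEquiv.toModuleIso (eqN E)

/-- Dimension shifting along cosyzygies. -/
lemma chain {W : ModuleCat.{u} R} (P : ProjectiveResolution W) (i : ℕ) :
    ∀ n : ℕ, 1 ≤ n →
    IsZero ((P.complex.linearYonedaObj R (ModuleCat.of R N)).homology (n + i)) →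
    IsZero ((P.complex.linearYonedaObj R (Zm E i)).homology n) := by
  induction i with
  | zero =>
    intro n _ hvan
    have e := (HomologicalComplex.homologyFunctor (ModuleCat.{u} R) _ n).mapIso
      (homMapIso P.complex (isoN E))
    exact IsZero.of_iso (by simpa using hvan) e.symm
  | succ i ih =>
    intro n hn hvan
    have h3 : IsZero ((P.complex.linearYonedaObj R (Zm E i)).homology (n + 1)) := by
      refine ih (n + 1) (by omega) ?_
      have hnn : n + 1 + i = n + (i + 1) := by omega
      rw [hnn]
      exact hvan
    have h1 : IsZero ((P.complex.linearYonedaObj R (E.cocomplex.X i)).homology n) := by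
      cases n with
      | zero => omega
      | succ m => exact isZero_homology_hom_injective P (E.cocomplex.X i) m
    exact isZero_homology_shift P (ZmSES_shortExact E i) n h1 h3

end InjRes

lemma subsingleton_of_isZero {M : ModuleCat.{u} R} (h : IsZero M) : Subsingleton ↥M := by
  rw [IsZero.iff_id_eq_zero] at h
  constructor
  intro a b
  have ha : a = (0 : ↥M) := by
    conv_lhs => rw [show a = (𝟙 M : M ⟶ M) a from rfl, h]
    rfl
  have hb : b = (0 : ↥M) := by
    conv_lhs => rw [show b = (𝟙 M : M ⟶ M) b from rfl, h]
    rfl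
  rw [ha, hb]

lemma isZero_of_subsingleton_iso {M M' : ModuleCat.{u} R} (e : M ≅ M')
    (h : Subsingleton ↥M) : IsZero M' := by
  haveI : Subsingleton ↥M' := by
    constructor
    intro a b
    have ha : e.hom (e.inv a) = a := ConcreteCategory.congr_hom e.inv_hom_id a
    have hb : e.hom (e.inv b) = b := ConcreteCategory.congr_hom e.inv_hom_id b
    rw [← ha, ← hb, Subsingleton.elim (e.inv a) (e.inv b)]
  exact ModuleCat.isZero_of_subsingleton M'

end Aux

/-- Let `R` be a commutative noetherian ring, `S` a faithfully flat (commutative)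
`R`-algebra, `d` a nonnegative integer bounding the projective dimension of every flat
`R`-module, and `N` an `R`-module with `Hom_R(S,N)` injective over `R` and
`Ext_R^n(S,N) = 0` for all `n > 0`.  Let `0 → N → E^0 → E^1 → ⋯` be an injective
resolution of `N` and let `K` be the `d`-th cosyzygy, i.e. the kernel of `E^d → E^{d+1}`.
Then `K` is a cotorsion `R`-module and `Hom_R(S,K)` is an injective `R`-module. -/
theorem cosyzygy_cotorsion_and_homS_injective
    (R : Type u) [CommRing R] [IsNoetherianRing R]
    (S : Type u) [CommRing S] [Algebra R S] [Module.FaithfullyFlat R S]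
    (d : ℕ)
    (hd : ∀ (F : Type u) [AddCommGroup F] [Module R F], Module.Flat R F →
      projResBddAbove R (ModuleCat.of R F) d)
    (N : Type u) [AddCommGroup N] [Module R N]
    (hinj : Module.Injective R (S →ₗ[R] N))
    (hext : ∀ n : ℕ, 0 < n → Subsingleton (extmod R S N n))
    (E : InjectiveResolution (ModuleCat.of R N)) :
    Cotorsion R ↥(LinearMap.ker (E.cocomplex.d d (d + 1)).hom) ∧
      Module.Injective R (S →ₗ[R] ↥(LinearMap.ker (E.cocomplex.d d (d + 1)).hom)) := by
  constructor
  · intro F _ _ hF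
    obtain ⟨P, hP⟩ := hd F hF
    have hvan : IsZero ((P.complex.linearYonedaObj R (ModuleCat.of R N)).homology (1 + d)) :=
      isZero_homology_hom_of_isZero (hP (1 + d) (by omega)) (ModuleCat.of R N)
    have hz := chain E P d 1 le_rfl hvan
    have e := P.isoExt (R := R) 1 (Zm E d)
    exact subsingleton_of_isZero (hz.of_iso e)
  · obtain ⟨P⟩ : Nonempty (ProjectiveResolution (ModuleCat.of R S)) :=
      ⟨ProjectiveResolution.of _⟩
    have main : ∀ i : ℕ, Module.Injective R (S →ₗ[R] ↥(Zm E i)) := by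
      intro i
      induction i with
      | zero =>
        exact injective_of_linearEquiv (LinearEquiv.congrRight (eqN E)) hinj
      | succ i hi =>
        haveI hObjEi : Injective (ModuleCat.of R ↥(E.cocomplex.X i)) := E.injective i
        have hEi : Module.Injective R ↥(E.cocomplex.X i) :=
          Module.injective_module_of_injective_object R ↥(E.cocomplex.X i)
        have hBmod : Module.Injective R (S →ₗ[R] ↥(E.cocomplex.X i)) :=
          homFlatInjective S ↥(E.cocomplex.X i) hEi
        have hvanN : IsZero
            ((P.complex.linearYonedaObj R (ModuleCat.of R N)).homology (1 + i)) := by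
          have hsub : Subsingleton (extmod R S N (1 + i)) := hext (1 + i) (by omega)
          exact isZero_of_subsingleton_iso (P.isoExt (R := R) (1 + i) (ModuleCat.of R N)) hsub
        have hvan1 := chain E P i 1 le_rfl hvanN
        let sub := (LinearMap.ker (E.cocomplex.d i (i + 1)).hom).subtype
        let pr := LinearMap.codRestrict _ (E.cocomplex.d i (i + 1)).hom (d_mem_ker E i)
        let T' : ShortComplex (ModuleCat.{u} R) :=
          ShortComplex.mk
            (ModuleCat.ofHom ((LinearMap.llcomp R S _ _) sub) :
              ModuleCat.of R (S →ₗ[R] ↥(Zm E i)) ⟶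
                ModuleCat.of R (S →ₗ[R] ↥(E.cocomplex.X i)))
            (ModuleCat.ofHom ((LinearMap.llcomp R S _ _) pr) :
              ModuleCat.of R (S →ₗ[R] ↥(E.cocomplex.X i)) ⟶
                ModuleCat.of R (S →ₗ[R] ↥(Zm E (i + 1))))
            (by
              apply ModuleCat.hom_ext
              apply LinearMap.ext; intro (ψ : S →ₗ[R] ↥(Zm E i))
              apply LinearMap.ext; intro s
              exact Subtype.ext (ψ s).2)
        have hT' : T'.ShortExact := by
          refine ShortComplex.ShortExact.mk' ?_ ?_ ?_
          · rw [ShortComplex.moduleCat_exact_iff]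
            intro (ψ : S →ₗ[R] ↥(E.cocomplex.X i)) hψ
            have hψ' : pr ∘ₗ ψ = (0 : S →ₗ[R] ↥(Zm E (i + 1))) := hψ
            have hmem : ∀ s0 : S, ψ s0 ∈ LinearMap.ker (E.cocomplex.d i (i + 1)).hom := by
              intro s0
              exact congrArg Subtype.val (DFunLike.congr_fun hψ' s0)
            refine ⟨LinearMap.codRestrict _ ψ hmem, ?_⟩
            show sub ∘ₗ LinearMap.codRestrict _ ψ hmem = ψ
            apply LinearMap.ext; intro s
            rfl
          · rw [ModuleCat.mono_iff_injective]
            intro (ψ : S →ₗ[R] ↥(Zm E i)) (ψ' : S →ₗ[R] ↥(Zm E i)) h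
            have h' : sub ∘ₗ ψ = sub ∘ₗ ψ' := h
            apply LinearMap.ext; intro s
            exact Subtype.ext (DFunLike.congr_fun h' s)
          · rw [ModuleCat.epi_iff_surjective]
            intro f
            obtain ⟨ψ, hψ⟩ := exists_lift_of_isZero_homology_one P (ZmSES_shortExact E i) hvan1
              (ModuleCat.ofHom f : ModuleCat.of R S ⟶ Zm E (i + 1))
            exact ⟨ψ.hom, congrArg ModuleCat.Hom.hom hψ⟩
        haveI hiA : Injective T'.X₁ :=
          Module.injective_object_of_injective_module R _ (inj := hi)
        haveI hiB : Injective T'.X₂ :=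
          Module.injective_object_of_injective_module R _ (inj := hBmod)
        haveI := hT'.mono_f
        haveI := hT'.epi_g
        obtain ⟨r, hr⟩ := Injective.factors (𝟙 T'.X₁) T'.f
        have hk : T'.f ≫ (𝟙 T'.X₂ - r ≫ T'.f) = 0 := by
          rw [Preadditive.comp_sub, Category.comp_id, ← Category.assoc, hr, Category.id_comp,
            sub_self]
        have hgd := hT'.exact.g_desc (𝟙 T'.X₂ - r ≫ T'.f) hk
        have hsec : hT'.exact.desc (𝟙 T'.X₂ - r ≫ T'.f) hk ≫ T'.g = 𝟙 T'.X₃ := by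
          rw [← cancel_epi T'.g, ← Category.assoc, hgd, Preadditive.sub_comp, Category.id_comp,
            Category.assoc, T'.zero, Limits.comp_zero, sub_zero, Category.comp_id]
        have hinjC : Injective T'.X₃ :=
          injective_of_split (hT'.exact.desc (𝟙 T'.X₂ - r ≫ T'.f) hk) T'.g hsec
        exact Module.injective_module_of_injective_object R (S →ₗ[R] ↥(Zm E (i + 1)))
          (inj := hinjC)
    exact main d
end
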